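/- arXiv:math/0203184 — 2 statements merged into one kernel-verified Lean document; each statement's English description precedes it below -/
import Mathlib

section
/- The path space (Π,d) is a complete metric space, where Π is the set of pairs (f,t₀) with t₀ ∈ [-∞,∞] and f : [t₀,∞] → [-∞,∞] such that t ↦ Φ(f(t),t) is continuous, and d((f₁,t₁),(f₂,t₂)) = sup_t |Φ(f̂₁(t),t) - Φ(f̂₂(t),t)| ⊔ |Ψ(t₁)-Ψ(t₂)|. -/
open Filter Topology

/-- `tanh` extended to `[-∞,∞]` with `tanh(±∞) = ±1`. -/
noncomputable def etanh (x : EReal) : ℝ :=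
  if x = ⊤ then 1 else if x = ⊥ then -1 else Real.tanh x.toReal

/-- `Φ(x,t) = tanh(x)/(1+|t|)`, extended to `[-∞,∞]²` (equal to `0` when `t = ±∞`). -/
noncomputable def PhiBar (x t : EReal) : ℝ :=
  if t = ⊤ ∨ t = ⊥ then 0 else etanh x / (1 + |t.toReal|)
/-- `Ψ(t) = tanh(t)` extended to `[-∞,∞]`. -/
noncomputable def PsiBar (t : EReal) : ℝ := etanh t

/-- The path space `Π`: a path is a pair of a starting time `t₀ ∈ [-∞,∞]` and a function
`f̂ : [-∞,∞] → [-∞,∞]` (the extension of `f : [t₀,∞] → [-∞,∞]` which is constant `= f(t₀)`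
before `t₀`), such that `t ↦ Φ(f̂(t),t)` is continuous. -/
def PathSpace : Type :=
  { p : EReal × (EReal → EReal) //
      (∀ s, s ≤ p.1 → p.2 s = p.2 p.1) ∧ Continuous (fun s => PhiBar (p.2 s) s) }

/-- The metric `d((f₁,t₁),(f₂,t₂)) = sup_t |Φ(f̂₁(t),t) - Φ(f̂₂(t),t)| ⊔ |Ψ(t₁) - Ψ(t₂)|`. -/
noncomputable def pathDist (p q : PathSpace) : ℝ :=
  (⨆ s : EReal, |PhiBar (p.1.2 s) s - PhiBar (q.1.2 s) s|) ⊔ |PsiBar p.1.1 - PsiBar q.1.1|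
lemma tanh_eq' (x : ℝ) : Real.tanh x = (Real.exp (2*x) - 1) / (Real.exp (2*x) + 1) := by
  have h := Real.exp_pos x
  rw [Real.tanh_eq_sinh_div_cosh, Real.sinh_eq, Real.cosh_eq, Real.exp_neg, two_mul,
    Real.exp_add]
  rw [div_eq_div_iff (by positivity) (by positivity)]
  field_simp

lemma tanh_lt_one' (x : ℝ) : Real.tanh x < 1 := by
  rw [tanh_eq']; have h := Real.exp_pos (2*x)
  rw [div_lt_one (by linarith)]; linarith

lemma neg_one_lt_tanh' (x : ℝ) : -1 < Real.tanh x := by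
  rw [tanh_eq']; have h := Real.exp_pos (2*x)
  rw [lt_div_iff₀ (by linarith)]; linarith

lemma tanh_strictMono' : StrictMono Real.tanh := by
  intro x y hxy
  rw [tanh_eq', tanh_eq']
  have ha := Real.exp_pos (2*x)
  have hb := Real.exp_pos (2*y)
  have hab : Real.exp (2*x) < Real.exp (2*y) := Real.exp_lt_exp.2 (by linarith)
  rw [div_lt_div_iff₀ (by linarith) (by linarith)]
  nlinarith

lemma tanh_surj (v : ℝ) (hv : -1 < v) (hv' : v < 1) :
    Real.tanh (Real.log ((1+v)/(1-v)) / 2) = v := by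
  have h1 : (0:ℝ) < 1 + v := by linarith
  have h2 : (0:ℝ) < 1 - v := by linarith
  have hy : (0:ℝ) < (1+v)/(1-v) := by positivity
  rw [tanh_eq']
  have : 2 * (Real.log ((1+v)/(1-v)) / 2) = Real.log ((1+v)/(1-v)) := by ring
  rw [this, Real.exp_log hy]
  rw [div_eq_iff (by positivity)]
  field_simp
  ring

lemma etanh_top : etanh ⊤ = 1 := by simp [etanh]
lemma etanh_bot : etanh ⊥ = -1 := by simp [etanh]
lemma etanh_coe (x : ℝ) : etanh x = Real.tanh x := by
  simp [etanh, EReal.coe_ne_top, EReal.coe_ne_bot]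

lemma etanh_strictMono : StrictMono etanh := by
  intro x y hxy
  induction x using EReal.rec with
  | bot =>
    induction y using EReal.rec with
    | bot => exact absurd hxy (lt_irrefl _)
    | coe y => rw [etanh_bot, etanh_coe]; exact neg_one_lt_tanh' y
    | top => rw [etanh_bot, etanh_top]; norm_num
  | coe x =>
    induction y using EReal.rec with
    | bot => exact absurd hxy (by simp)
    | coe y =>
      rw [etanh_coe, etanh_coe]
      exact tanh_strictMono' (EReal.coe_lt_coe_iff.1 hxy)
    | top => rw [etanh_coe, etanh_top]; exact tanh_lt_one' x
  | top => exact absurd hxy (by simp)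

lemma etanh_mem (x : EReal) : etanh x ∈ Set.Icc (-1:ℝ) 1 := by
  induction x using EReal.rec with
  | bot => simp [etanh_bot]
  | coe x =>
    rw [etanh_coe]
    exact ⟨(neg_one_lt_tanh' x).le, (tanh_lt_one' x).le⟩
  | top => simp [etanh_top]

lemma abs_etanh_le (x : EReal) : |etanh x| ≤ 1 :=
  abs_le.2 ⟨(etanh_mem x).1, (etanh_mem x).2⟩

noncomputable def einv (v : ℝ) : EReal :=
  if 1 ≤ v then ⊤ else if v ≤ -1 then ⊥ else ((Real.log ((1+v)/(1-v)) / 2 : ℝ) : EReal)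

lemma etanh_einv {v : ℝ} (h1 : -1 ≤ v) (h2 : v ≤ 1) : etanh (einv v) = v := by
  unfold einv
  split_ifs with hv hv'
  · rw [etanh_top]; linarith
  · rw [etanh_bot]; linarith
  · rw [etanh_coe]; exact tanh_surj v (by push_neg at hv'; linarith) (by push_neg at hv; linarith)

lemma phiBar_coe (x : EReal) (t : ℝ) : PhiBar x t = etanh x / (1 + |t|) := by
  simp [PhiBar, EReal.coe_ne_top, EReal.coe_ne_bot]

lemma one_add_abs_pos (t : ℝ) : (0:ℝ) < 1 + |t| := by positivity

lemma abs_phiBar_le (x t : EReal) : |PhiBar x t| ≤ 1 := by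
  unfold PhiBar
  split_ifs with h
  · simp
  · rw [abs_div, abs_of_pos (one_add_abs_pos t.toReal), div_le_one (one_add_abs_pos t.toReal)]
    have h1 := abs_etanh_le x
    have h2 := abs_nonneg t.toReal
    linarith

lemma pathBdd (p q : PathSpace) :
    BddAbove (Set.range fun s : EReal => |PhiBar (p.1.2 s) s - PhiBar (q.1.2 s) s|) := by
  refine ⟨2, ?_⟩
  rintro _ ⟨s, rfl⟩
  have h1 := abs_le.1 (abs_phiBar_le (p.1.2 s) s)
  have h2 := abs_le.1 (abs_phiBar_le (q.1.2 s) s)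
  rw [abs_le]
  constructor <;> linarith

lemma sup_nonneg' (p q : PathSpace) :
    0 ≤ ⨆ s : EReal, |PhiBar (p.1.2 s) s - PhiBar (q.1.2 s) s| :=
  le_ciSup_of_le (pathBdd p q) (0 : EReal) (abs_nonneg _)

lemma pathDist_nonneg (p q : PathSpace) : 0 ≤ pathDist p q :=
  le_trans (abs_nonneg _) (le_max_right _ _)

lemma pathDist_self (p : PathSpace) : pathDist p p = 0 := by
  unfold pathDist
  simp [ciSup_const]

lemma pathDist_comm (p q : PathSpace) : pathDist p q = pathDist q p := by
  unfold pathDist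
  congr 1
  · exact iSup_congr fun s => abs_sub_comm _ _
  · exact abs_sub_comm _ _

lemma pathDist_triangle (p q r : PathSpace) :
    pathDist p r ≤ pathDist p q + pathDist q r := by
  unfold pathDist
  apply max_le
  · apply le_trans ?_ (add_le_add (le_max_left _ _) (le_max_left _ _))
    apply ciSup_le
    intro s
    calc |PhiBar (p.1.2 s) s - PhiBar (r.1.2 s) s|
        ≤ |PhiBar (p.1.2 s) s - PhiBar (q.1.2 s) s| + |PhiBar (q.1.2 s) s - PhiBar (r.1.2 s) s| :=
          abs_sub_le _ _ _
      _ ≤ _ := add_le_add (le_ciSup (pathBdd p q) s) (le_ciSup (pathBdd q r) s)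
  · apply le_trans ?_ (add_le_add (le_max_right _ _) (le_max_right _ _))
    exact abs_sub_le _ _ _

lemma pathDist_eq_zero {p q : PathSpace} (h : pathDist p q = 0) :
    p.1.1 = q.1.1 ∧ ∀ s : EReal, s ≠ ⊤ → s ≠ ⊥ → p.1.2 s = q.1.2 s := by
  have hsup : (⨆ s : EReal, |PhiBar (p.1.2 s) s - PhiBar (q.1.2 s) s|) ≤ 0 :=
    h ▸ le_max_left _ _
  have hpsi : |PsiBar p.1.1 - PsiBar q.1.1| ≤ 0 := h ▸ le_max_right _ _
  constructor
  · have : PsiBar p.1.1 = PsiBar q.1.1 := by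
      have := abs_nonneg (PsiBar p.1.1 - PsiBar q.1.1)
      have : |PsiBar p.1.1 - PsiBar q.1.1| = 0 := le_antisymm hpsi this
      linarith [abs_eq_zero.1 this, sub_eq_zero.1 (abs_eq_zero.1 this)]
    exact etanh_strictMono.injective this
  · intro s hst hsb
    have hs : |PhiBar (p.1.2 s) s - PhiBar (q.1.2 s) s| ≤ 0 :=
      le_trans (le_ciSup (pathBdd p q) s) hsup
    have hs0 : PhiBar (p.1.2 s) s = PhiBar (q.1.2 s) s := by
      have := abs_nonneg (PhiBar (p.1.2 s) s - PhiBar (q.1.2 s) s)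
      have h0 : |PhiBar (p.1.2 s) s - PhiBar (q.1.2 s) s| = 0 := le_antisymm hs this
      linarith [sub_eq_zero.1 (abs_eq_zero.1 h0)]
    have hden := one_add_abs_pos s.toReal
    unfold PhiBar at hs0
    rw [if_neg (by tauto), if_neg (by tauto)] at hs0
    have : etanh (p.1.2 s) = etanh (q.1.2 s) := by
      field_simp at hs0
      exact hs0
    exact etanh_strictMono.injective this

noncomputable def pcore (h : ℝ → ℝ) (s : EReal) : EReal :=
  if s = ⊤ ∨ s = ⊥ then einv (h 0) else einv (h s.toReal)

noncomputable def pbuild (h : ℝ → ℝ) (t₀ : EReal) (s : EReal) : EReal :=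
  if s ≤ t₀ then pcore h t₀ else pcore h s

lemma pbuild_const (h : ℝ → ℝ) (t₀ : EReal) : ∀ s, s ≤ t₀ → pbuild h t₀ s = pbuild h t₀ t₀ := by
  intro s hs
  simp only [pbuild, if_pos hs, if_pos (le_refl t₀)]

lemma etrichot (a : EReal) : a = ⊥ ∨ a = ⊤ ∨ ∃ r : ℝ, a = (r:EReal) := by
  induction a using EReal.rec with
  | bot => exact Or.inl rfl
  | coe r => exact Or.inr (Or.inr ⟨r, rfl⟩)
  | top => exact Or.inr (Or.inl rfl)

lemma pathComplete (u : ℕ → PathSpace)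
    (hC : ∀ ε > (0:ℝ), ∃ N, ∀ m ≥ N, ∀ n ≥ N, pathDist (u m) (u n) < ε) :
    ∃ x : PathSpace, ∀ ε > (0:ℝ), ∃ N, ∀ n ≥ N, pathDist (u n) x < ε := by
  classical
  set g : ℕ → EReal → ℝ := fun n s => PhiBar ((u n).1.2 s) s with hgdef
  -- pointwise bounds between members of the sequence
  have hgb : ∀ m n : ℕ, ∀ s : EReal, |g m s - g n s| ≤ pathDist (u m) (u n) := by
    intro m n s
    exact le_trans (le_ciSup (pathBdd (u m) (u n)) s) (le_max_left _ _)
  have hpsib : ∀ m n : ℕ, |PsiBar (u m).1.1 - PsiBar (u n).1.1| ≤ pathDist (u m) (u n) :=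
    fun m n => le_max_right _ _
  -- pointwise limits
  have hcau : ∀ s : EReal, ∃ L : ℝ, Filter.Tendsto (fun n => g n s) Filter.atTop (nhds L) := by
    intro s
    apply cauchySeq_tendsto_of_complete
    rw [Metric.cauchySeq_iff]
    intro ε hε
    obtain ⟨N, hN⟩ := hC ε hε
    exact ⟨N, fun m hm n hn => lt_of_le_of_lt ((Real.dist_eq _ _).le.trans (hgb m n s)) (hN m hm n hn)⟩
  choose G hG using hcau
  -- uniform estimate
  have hunif : ∀ ε > (0:ℝ), ∃ N, ∀ n ≥ N, ∀ s : EReal, |g n s - G s| ≤ ε := by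
    intro ε hε
    obtain ⟨N, hN⟩ := hC ε hε
    refine ⟨N, fun n hn s => ?_⟩
    have h1 : Filter.Tendsto (fun m => |g n s - g m s|) Filter.atTop (nhds |g n s - G s|) :=
      (Filter.Tendsto.sub tendsto_const_nhds (hG s)).abs
    apply le_of_tendsto h1
    filter_upwards [Filter.eventually_ge_atTop N] with m hm
    exact le_of_lt (lt_of_le_of_lt (hgb n m s) (hN n hn m hm))
  -- G is continuous
  have hGcont : Continuous G := by
    have ht : TendstoUniformly g G Filter.atTop := by
      rw [Metric.tendstoUniformly_iff]
      intro ε hε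
      obtain ⟨N, hN⟩ := hunif (ε/2) (by linarith)
      filter_upwards [Filter.eventually_ge_atTop N] with n hn s
      rw [Real.dist_eq, abs_sub_comm]
      exact lt_of_le_of_lt (hN n hn s) (by linarith)
    exact ht.continuous (Filter.Eventually.of_forall fun n => (u n).2.2).frequently
  -- limit of starting times
  have hpsicau : ∃ ψ : ℝ, Filter.Tendsto (fun n => PsiBar (u n).1.1) Filter.atTop (nhds ψ) := by
    apply cauchySeq_tendsto_of_complete
    rw [Metric.cauchySeq_iff]
    intro ε hε
    obtain ⟨N, hN⟩ := hC ε hε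
    exact ⟨N, fun m hm n hn => lt_of_le_of_lt ((Real.dist_eq _ _).le.trans (hpsib m n)) (hN m hm n hn)⟩
  obtain ⟨ψ, hψ⟩ := hpsicau
  have hψmem : ψ ∈ Set.Icc (-1:ℝ) 1 :=
    isClosed_Icc.mem_of_tendsto hψ (Filter.Eventually.of_forall fun n => etanh_mem _)
  have ht₀ : etanh (einv ψ) = ψ := etanh_einv hψmem.1 hψmem.2
  set t₀ : EReal := einv ψ with ht₀def
  -- the function h
  set h : ℝ → ℝ := fun x => G x * (1 + |x|) with hhdef
  have hval : ∀ x : ℝ, Filter.Tendsto (fun n => etanh ((u n).1.2 (x:EReal)))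
      Filter.atTop (nhds (h x)) := by
    intro x
    have he : (fun n => etanh ((u n).1.2 (x:EReal))) = fun n => g n x * (1 + |x|) := by
      funext n
      rw [hgdef]
      simp only []
      rw [phiBar_coe, div_mul_cancel₀ _ (ne_of_gt (one_add_abs_pos x))]
    rw [he]
    exact (hG (x:EReal)).mul_const _
  have hmemh : ∀ x : ℝ, h x ∈ Set.Icc (-1:ℝ) 1 := fun x =>
    isClosed_Icc.mem_of_tendsto (hval x) (Filter.Eventually.of_forall fun n => etanh_mem _)
  have hcont_h : Continuous h :=
    (hGcont.comp continuous_coe_real_ereal).mul (continuous_const.add continuous_abs)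
  -- constancy strictly before t₀
  have hconstlt : ∀ x y : ℝ, (x:EReal) < t₀ → (y:EReal) < t₀ → h x = h y := by
    intro x y hx hy
    have hx' : etanh (x:EReal) < ψ := ht₀ ▸ etanh_strictMono hx
    have hy' : etanh (y:EReal) < ψ := ht₀ ▸ etanh_strictMono hy
    have hev : ∀ᶠ n in Filter.atTop, etanh ((u n).1.2 (x:EReal)) = etanh ((u n).1.2 (y:EReal)) := by
      filter_upwards [hψ.eventually (eventually_gt_nhds hx'),
        hψ.eventually (eventually_gt_nhds hy')] with n h1n h2n
      have hx'' : (x:EReal) ≤ (u n).1.1 := (etanh_strictMono.lt_iff_lt.1 h1n).le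
      have hy'' : (y:EReal) ≤ (u n).1.1 := (etanh_strictMono.lt_iff_lt.1 h2n).le
      rw [(u n).2.1 _ hx'', (u n).2.1 _ hy'']
    exact tendsto_nhds_unique ((hval x).congr' hev) (hval y)
  -- constancy up to t₀
  have hconst : ∀ x y : ℝ, (x:EReal) ≤ t₀ → (y:EReal) ≤ t₀ → h x = h y := by
    have key : ∀ x : ℝ, (x:EReal) ≤ t₀ → ∀ z : ℝ, (z:EReal) < t₀ → h x = h z := by
      intro x hx z hz
      rcases lt_or_eq_of_le hx with h' | h'
      · exact hconstlt x z h' hz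
      · have hlt : ∀ w : ℝ, w < x → h w = h z := fun w hw =>
          hconstlt w z (h' ▸ EReal.coe_lt_coe_iff.2 hw) hz
        have l1 : Filter.Tendsto h (nhdsWithin x (Set.Iio x)) (nhds (h x)) :=
          (hcont_h.continuousAt).continuousWithinAt
        have l2 : Filter.Tendsto h (nhdsWithin x (Set.Iio x)) (nhds (h z)) := by
          apply Filter.Tendsto.congr' ?_ tendsto_const_nhds
          filter_upwards [self_mem_nhdsWithin] with w hw
          exact (hlt w hw).symm
        exact tendsto_nhds_unique l1 l2
    intro x y hx hy
    obtain ⟨z, hz⟩ : ∃ z : ℝ, (z:EReal) < t₀ := by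
      rcases etrichot t₀ with hb | htp | ⟨r, hr⟩
      · rw [hb] at hx; exact absurd (le_bot_iff.1 hx) (EReal.coe_ne_bot x)
      · exact ⟨0, by rw [htp]; exact EReal.coe_lt_top 0⟩
      · exact ⟨r - 1, by rw [hr]; exact EReal.coe_lt_coe_iff.2 (by linarith)⟩
    rw [key x hx z hz, key y hy z hz]
  -- values of the built function
  have hfval : ∀ x : ℝ, etanh (pbuild h t₀ (x:EReal)) = h x := by
    intro x
    unfold pbuild
    split_ifs with hle
    · unfold pcore
      rcases etrichot t₀ with hb | htp | ⟨r, hr⟩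
      · rw [hb] at hle; exact absurd (le_bot_iff.1 hle) (EReal.coe_ne_bot x)
      · rw [htp, if_pos (Or.inl rfl), etanh_einv (hmemh 0).1 (hmemh 0).2]
        exact (hconst x 0 hle (by rw [htp]; exact le_top)).symm
      · rw [hr, if_neg (by simp), EReal.toReal_coe, etanh_einv (hmemh r).1 (hmemh r).2]
        exact (hconst x r hle (le_of_eq hr.symm)).symm
    · unfold pcore
      rw [if_neg (by simp), EReal.toReal_coe, etanh_einv (hmemh x).1 (hmemh x).2]
  -- G vanishes at infinity
  have hGtop : G ⊤ = 0 := by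
    have : (fun n => g n ⊤) = fun _ => (0:ℝ) := by
      funext n; simp [hgdef, PhiBar]
    exact tendsto_nhds_unique (this ▸ hG ⊤) tendsto_const_nhds
  have hGbot : G ⊥ = 0 := by
    have : (fun n => g n ⊥) = fun _ => (0:ℝ) := by
      funext n; simp [hgdef, PhiBar]
    exact tendsto_nhds_unique (this ▸ hG ⊥) tendsto_const_nhds
  -- PhiBar of the built function equals G
  have hPhiG : ∀ s : EReal, PhiBar (pbuild h t₀ s) s = G s := by
    intro s
    induction s using EReal.rec with
    | bot => rw [hGbot]; simp [PhiBar]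
    | coe x =>
      rw [phiBar_coe, hfval x, hhdef]
      simp only []
      rw [mul_div_cancel_right₀ _ (ne_of_gt (one_add_abs_pos x))]
    | top => rw [hGtop]; simp [PhiBar]
  -- the limit path
  refine ⟨⟨(t₀, pbuild h t₀), pbuild_const h t₀, ?_⟩, ?_⟩
  · have : (fun s => PhiBar (pbuild h t₀ s) s) = G := funext hPhiG
    rw [this]; exact hGcont
  · intro ε hε
    obtain ⟨N1, hN1⟩ := hunif (ε/2) (by linarith)
    obtain ⟨N2, hN2⟩ := (Metric.tendsto_atTop.1 hψ) ε hε
    refine ⟨max N1 N2, fun n hn => ?_⟩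
    have hn1 : n ≥ N1 := le_trans (le_max_left _ _) hn
    have hn2 : n ≥ N2 := le_trans (le_max_right _ _) hn
    unfold pathDist
    apply max_lt
    · apply lt_of_le_of_lt (ciSup_le fun s => ?_) (show ε/2 < ε by linarith)
      show |PhiBar ((u n).1.2 s) s - PhiBar (pbuild h t₀ s) s| ≤ ε/2
      rw [hPhiG s]
      exact hN1 n hn1 s
    · show |PsiBar (u n).1.1 - PsiBar t₀| < ε
      have : PsiBar t₀ = ψ := ht₀
      rw [this, ← Real.dist_eq]
      exact hN2 n hn2

/-- The path space `(Π,d)` is a complete metric space: `d` satisfies the metric axioms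
(points at distance `0` have the same starting time and agree at all finite times, which
is equality in `Π` since the values of a path at `t = ±∞` are identified by the
compactification of `ℝ²`), and every `d`-Cauchy sequence converges. -/
theorem stmt_3 :
    (∀ p, pathDist p p = 0) ∧
    (∀ p q, 0 ≤ pathDist p q) ∧
    (∀ p q, pathDist p q = pathDist q p) ∧
    (∀ p q r, pathDist p r ≤ pathDist p q + pathDist q r) ∧
    (∀ p q : PathSpace, pathDist p q = 0 →
      p.1.1 = q.1.1 ∧ ∀ s : EReal, s ≠ ⊤ → s ≠ ⊥ → p.1.2 s = q.1.2 s) ∧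
    (∀ u : ℕ → PathSpace,
      (∀ ε > (0:ℝ), ∃ N, ∀ m ≥ N, ∀ n ≥ N, pathDist (u m) (u n) < ε) →
      ∃ x : PathSpace, ∀ ε > (0:ℝ), ∃ N, ∀ n ≥ N, pathDist (u n) x < ε) := by
  exact ⟨pathDist_self, pathDist_nonneg, pathDist_comm, pathDist_triangle,
    fun p q h => pathDist_eq_zero h, pathComplete⟩
end

section
/- The path space (Π,d) is a separable metric space. -/
/-!
`d` is the distance pulled back along `p ↦ (Ψ(t₀), t ↦ Φ(f̂(t),t))` into `ℝ × C([-∞,∞], ℝ)`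
(with the sup metric on the second factor). Since `[-∞,∞]` is a compact metrizable space,
`C([-∞,∞], ℝ)` is second countable, and any subset of a separable metric space is separable.
-/

open Filter Topology

theorem exists_countable_forall_exists_dist_lt {α X : Type*} [PseudoMetricSpace X]
    [TopologicalSpace.SeparableSpace X] (f : α → X) :
    ∃ D : Set α, D.Countable ∧ ∀ a, ∀ ε > 0, ∃ b ∈ D, dist (f a) (f b) < ε := by
  obtain ⟨t, ht_range, ht_countable, ht_dense⟩ :=
    (TopologicalSpace.IsSeparable.of_separableSpace (Set.range f)).exists_countable_dense_subset
  choose g hg using fun y : t => ht_range y.2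
  have : Countable t := ht_countable.to_subtype
  refine ⟨Set.range g, Set.countable_range g, fun a ε hε => ?_⟩
  obtain ⟨y, hy, hdist⟩ := Metric.mem_closure_iff.1 (ht_dense (Set.mem_range_self a)) ε hε
  exact ⟨g ⟨y, hy⟩, Set.mem_range_self _, by rwa [hg]⟩

noncomputable def pathEmb (p : PathSpace) : ℝ × C(EReal, ℝ) :=
  (PsiBar p.1.1, ⟨fun s => PhiBar (p.1.2 s) s, p.2.2⟩)

theorem pathDist_eq_dist (p q : PathSpace) : pathDist p q = dist (pathEmb p) (pathEmb q) := by
  simp only [pathDist, pathEmb, Prod.dist_eq, ← BoundedContinuousFunction.dist_mkOfCompact,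
    BoundedContinuousFunction.dist_eq_iSup, BoundedContinuousFunction.mkOfCompact_apply,
    ContinuousMap.coe_mk, Real.dist_eq]
  rw [max_comm]

/-- The path space `(Π,d)` is separable: it has a countable `d`-dense subset. -/
theorem stmt_4 :
    ∃ D : Set PathSpace, D.Countable ∧
      ∀ p : PathSpace, ∀ ε > (0:ℝ), ∃ q ∈ D, pathDist p q < ε := by
  simpa only [pathDist_eq_dist] using exists_countable_forall_exists_dist_lt pathEmb
end
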